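/- arXiv:2101.01768 — 4 statements merged into one kernel-verified Lean document; each statement's English description precedes it below -/
import Mathlib

section
/- Let G_c be a finite simple graph, i a vertex of G_c, and S_i a set of vertices that is a union of cliques each of which contains i and is contained in N[i] (equivalently, i ∈ S_i ⊆ N[i]). Define M'_i = (N[i] ∪ M_{i,2}) \ S_i, where M_{i,2} is the set of vertices at graph distance exactly 2 from i in G_c. If M'_i = ∅, then S_i is a feasible set. If M'_i ≠ ∅, then S_i is a feasible set if and only if for every maximal independent set I of the subgraph of G_c induced on M'_i, there exists at least one vertex of S_i that is not adjacent in G_c to any vertex of I. -/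
/-!
Since `i ∈ S ⊆ N[i]`, a maximal independent set through `i` meets `S` exactly in `i`, so `S` is
feasible iff every maximal independent set meets `S`. The test is then necessary because a maximal
independent set of `M'` extends to one of `G`, whose vertex in `S` has no neighbour in it. It is
sufficient because a maximal independent set `I` avoiding `S` would give, through a maximal
independent set `K ⊇ I ∩ M'` of `M'`, a vertex `s ∈ S` with no neighbour in `I` (all neighbours
of `s` lie within two hops of `i`), contradicting maximality. When `M' = ∅` the test holds with
`s = i`.
-/

variable {V : Type*} [Fintype V] [DecidableEq V]

/-- `I` is an independent set of `G`: pairwise non-adjacent vertices. -/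
def IsIndepF (G : SimpleGraph V) (I : Finset V) : Prop :=
  ∀ a ∈ I, ∀ b ∈ I, ¬ G.Adj a b

/-- `I` is a maximal independent set of `G`: independent and not a proper
subset of any independent set of `G`. -/
def IsMaxIndepF (G : SimpleGraph V) (I : Finset V) : Prop :=
  IsIndepF G I ∧ ∀ J : Finset V, IsIndepF G J → I ⊆ J → I = J

/-- `S` is a feasible set of `G`: the minimum, over all maximal independent
sets `mis` of `G`, of `|mis ∩ S|` equals `1`. -/
def FeasibleSet (G : SimpleGraph V) (S : Finset V) : Prop :=
  sInf {n : ℕ | ∃ I : Finset V, IsMaxIndepF G I ∧ (I ∩ S).card = n} = 1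

/-- `I` is a maximal independent set of the subgraph of `G` induced on `W`:
`I ⊆ W`, `I` is independent, and `I` is not a proper subset of any
independent subset of `W`. -/
def IsMaxIndepOnF (G : SimpleGraph V) (W I : Finset V) : Prop :=
  I ⊆ W ∧ IsIndepF G I ∧ ∀ J : Finset V, J ⊆ W → IsIndepF G J → I ⊆ J → I = J

theorem Nat.sInf_eq_one_iff {s : Set ℕ} : sInf s = 1 ↔ 1 ∈ s ∧ 0 ∉ s := by
  constructor
  · intro h
    have hne : ¬ (0 ∈ s ∨ s = ∅) := by rw [← Nat.sInf_eq_zero, h]; exact one_ne_zero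
    obtain ⟨h0, hempty⟩ := not_or.mp hne
    exact ⟨h ▸ Nat.sInf_mem (Set.nonempty_iff_ne_empty.mpr hempty), h0⟩
  · rintro ⟨h1, h0⟩
    have hpos : sInf s ≠ 0 := fun h => h0 (h ▸ Nat.sInf_mem ⟨1, h1⟩)
    have hle := Nat.sInf_le h1
    omega

omit [Fintype V] in
theorem IsIndepF.insert_of_forall_not_adj {G : SimpleGraph V} {I : Finset V} (hI : IsIndepF G I)
    {v : V} (hv : ∀ u ∈ I, ¬ G.Adj v u) : IsIndepF G (insert v I) := by
  intro a ha b hb hab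
  rw [Finset.mem_insert] at ha hb
  rcases ha with rfl | ha <;> rcases hb with rfl | hb
  · exact G.loopless.irrefl _ hab
  · exact hv b hb hab
  · exact hv a ha hab.symm
  · exact hI a ha b hb hab

omit [Fintype V] [DecidableEq V] in
theorem IsIndepF.subset {G : SimpleGraph V} {I J : Finset V} (hI : IsIndepF G I) (hJI : J ⊆ I) :
    IsIndepF G J :=
  fun a ha b hb => hI a (hJI ha) b (hJI hb)

omit [Fintype V] in
theorem IsMaxIndepF.mem_of_forall_not_adj {G : SimpleGraph V} {I : Finset V} (hI : IsMaxIndepF G I)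
    {v : V} (hv : ∀ u ∈ I, ¬ G.Adj v u) : v ∈ I :=
  hI.2 _ (hI.1.insert_of_forall_not_adj hv) (Finset.subset_insert v I) ▸ Finset.mem_insert_self v I

omit [Fintype V] [DecidableEq V] in
theorem exists_isMaxIndepOnF_superset (G : SimpleGraph V) {W J : Finset V} (hJW : J ⊆ W)
    (hJ : IsIndepF G J) : ∃ K, J ⊆ K ∧ IsMaxIndepOnF G W K := by
  classical
  obtain ⟨K, hJK, hK⟩ := (W.powerset.filter (IsIndepF G)).finite_toSet.exists_le_maximal
    (a := J) (by simpa using ⟨hJW, hJ⟩)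
  simp only [Finset.coe_filter, Finset.mem_powerset] at hK
  exact ⟨K, hJK, hK.1.1, hK.1.2, fun L hLW hL hKL => le_antisymm hKL (hK.2 ⟨hLW, hL⟩ hKL)⟩

omit [DecidableEq V] in
theorem exists_isMaxIndepF_superset (G : SimpleGraph V) {J : Finset V} (hJ : IsIndepF G J) :
    ∃ K, J ⊆ K ∧ IsMaxIndepF G K := by
  obtain ⟨K, hJK, -, hK, hmax⟩ := exists_isMaxIndepOnF_superset G (Finset.subset_univ J) hJ
  exact ⟨K, hJK, hK, fun L hL => hmax L (Finset.subset_univ L) hL⟩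

theorem exists_isMaxIndepF_inter_eq_singleton (G : SimpleGraph V) [DecidableRel G.Adj] {i : V}
    {S : Finset V} (hiS : i ∈ S) (hSN : S ⊆ insert i (G.neighborFinset i)) :
    ∃ I, IsMaxIndepF G I ∧ I ∩ S = {i} := by
  have hsingle : IsIndepF G {i} := by
    simp only [IsIndepF, Finset.mem_singleton]
    rintro a rfl b rfl
    exact G.loopless.irrefl _
  obtain ⟨I, hiI, hI⟩ := exists_isMaxIndepF_superset G hsingle
  have hiI : i ∈ I := hiI (Finset.mem_singleton_self i)
  refine ⟨I, hI, Finset.eq_singleton_iff_unique_mem.mpr ⟨Finset.mem_inter.mpr ⟨hiI, hiS⟩, ?_⟩⟩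
  intro s hs
  obtain ⟨hsI, hsS⟩ := Finset.mem_inter.mp hs
  rcases Finset.mem_insert.mp (hSN hsS) with rfl | hs
  · rfl
  · exact absurd ((G.mem_neighborFinset i s).mp hs) (hI.1 i hiI s hsI)

theorem feasibleSet_iff_forall_inter_nonempty (G : SimpleGraph V) [DecidableRel G.Adj] {i : V}
    {S : Finset V} (hiS : i ∈ S) (hSN : S ⊆ insert i (G.neighborFinset i)) :
    FeasibleSet G S ↔ ∀ I, IsMaxIndepF G I → (I ∩ S).Nonempty := by
  obtain ⟨I₁, hI₁, hI₁S⟩ := exists_isMaxIndepF_inter_eq_singleton G hiS hSN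
  have hone : ∃ I, IsMaxIndepF G I ∧ (I ∩ S).card = 1 :=
    ⟨I₁, hI₁, by rw [hI₁S, Finset.card_singleton]⟩
  simp only [FeasibleSet, Nat.sInf_eq_one_iff, Set.mem_ofPred_eq, hone, true_and, not_exists,
    not_and, Finset.card_eq_zero, ← Finset.not_nonempty_iff_eq_empty, not_not]

theorem IsIndepF.exists_mem_forall_not_adj {G : SimpleGraph V} {S K : Finset V}
    (hmeet : ∀ I, IsMaxIndepF G I → (I ∩ S).Nonempty) (hK : IsIndepF G K) :
    ∃ s ∈ S, ∀ v ∈ K, ¬ G.Adj s v := by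
  obtain ⟨I, hKI, hI⟩ := exists_isMaxIndepF_superset G hK
  obtain ⟨s, hs⟩ := hmeet I hI
  obtain ⟨hsI, hsS⟩ := Finset.mem_inter.mp hs
  exact ⟨s, hsS, fun v hv => hI.1 s hsI v (hKI hv)⟩

theorem mem_closedNbhd_union_twoHop_of_adj (G : SimpleGraph V) [DecidableRel G.Adj] {i s u : V}
    (hs : s ∈ insert i (G.neighborFinset i)) (hsu : G.Adj s u) :
    u ∈ insert i (G.neighborFinset i) ∪ Finset.univ.filter (fun v => G.dist i v = 2) := by
  simp only [Finset.mem_union, Finset.mem_insert, G.mem_neighborFinset, Finset.mem_filter,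
    Finset.mem_univ, true_and] at hs ⊢
  by_cases hui : u = i
  · exact Or.inl (Or.inl hui)
  by_cases hiu : G.Adj i u
  · exact Or.inl (Or.inr hiu)
  rcases hs with rfl | his
  · exact absurd hsu hiu
  let p : G.Walk i u := .cons his hsu.toWalk
  have hle : G.dist i u ≤ 2 := G.dist_le p
  have hlt : 1 < G.dist i u := p.reachable.one_lt_dist_of_ne_of_not_adj (Ne.symm hui) hiu
  exact Or.inr (by omega)

theorem IsMaxIndepF.inter_nonempty_of_forall_isMaxIndepOnF (G : SimpleGraph V)
    [DecidableRel G.Adj] {i : V} {S M' I : Finset V} (hSN : S ⊆ insert i (G.neighborFinset i))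
    (hM' : M' = (insert i (G.neighborFinset i) ∪
      Finset.univ.filter (fun v => G.dist i v = 2)) \ S)
    (htest : ∀ K, IsMaxIndepOnF G M' K → ∃ s ∈ S, ∀ v ∈ K, ¬ G.Adj s v)
    (hI : IsMaxIndepF G I) : (I ∩ S).Nonempty := by
  by_contra hdisj
  rw [Finset.not_nonempty_iff_eq_empty, ← Finset.disjoint_iff_inter_eq_empty] at hdisj
  obtain ⟨K, hIK, hK⟩ :=
    exists_isMaxIndepOnF_superset G Finset.inter_subset_right (hI.1.subset Finset.inter_subset_left)
  obtain ⟨s, hsS, hsK⟩ := htest K hK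
  have hsI : s ∈ I := hI.mem_of_forall_not_adj fun u huI hsu => by
    have huM' : u ∈ M' := hM' ▸ Finset.mem_sdiff.mpr
      ⟨mem_closedNbhd_union_twoHop_of_adj G (hSN hsS) hsu, Finset.disjoint_left.mp hdisj huI⟩
    exact hsK u (hIK (Finset.mem_inter.mpr ⟨huI, huM'⟩)) hsu
  exact Finset.disjoint_left.mp hdisj hsI hsS

/-- Feasibility test via the two-hop neighborhood. Let `i ∈ S ⊆ N[i]`
(equivalently, `S` is a union of cliques each containing `i` and contained in
`N[i]`), and let `M' = (N[i] ∪ M_{i,2}) \ S`, where `M_{i,2}` is the set of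
vertices at distance exactly `2` from `i`. If `M' = ∅` then `S` is feasible;
if `M' ≠ ∅` then `S` is feasible iff for every maximal independent set `I` of
the subgraph induced on `M'` some vertex of `S` is adjacent to no vertex of `I`. -/
theorem feasible_iff_twoHop_test (G : SimpleGraph V) [DecidableRel G.Adj]
    (i : V) (S : Finset V) (hiS : i ∈ S)
    (hSN : S ⊆ insert i (G.neighborFinset i))
    (M' : Finset V)
    (hM' : M' = (insert i (G.neighborFinset i) ∪
      Finset.univ.filter (fun v => G.dist i v = 2)) \ S) :
    (M' = ∅ → FeasibleSet G S) ∧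
      (M' ≠ ∅ → (FeasibleSet G S ↔
        ∀ I : Finset V, IsMaxIndepOnF G M' I →
          ∃ s ∈ S, ∀ v ∈ I, ¬ G.Adj s v)) := by
  rw [feasibleSet_iff_forall_inter_nonempty G hiS hSN]
  have key : (∀ I, IsMaxIndepF G I → (I ∩ S).Nonempty) ↔
      ∀ K, IsMaxIndepOnF G M' K → ∃ s ∈ S, ∀ v ∈ K, ¬ G.Adj s v :=
    ⟨fun hmeet K hK => hK.2.1.exists_mem_forall_not_adj hmeet,
      fun htest I hI => hI.inter_nonempty_of_forall_isMaxIndepOnF G hSN hM' htest⟩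
  refine ⟨fun hempty => key.mpr fun K hK => ⟨i, hiS, fun v hv => ?_⟩, fun _ => key⟩
  exact absurd (hempty ▸ hK.1 hv) (Finset.notMem_empty v)
end

section
/- Let G_c be a finite simple graph, i a vertex of G_c, and S a set of vertices with i ∈ S ⊆ N[i]. Define M' = (N[i] ∪ M_{i,2}) \ S, where M_{i,2} is the set of vertices at graph distance exactly 2 from i in G_c, and suppose M' ≠ ∅. Then no maximal independent set of G_c is disjoint from S if and only if for every maximal independent set I of the subgraph of G_c induced on M', there exists a vertex s ∈ S that is not adjacent in G_c to any vertex of I. -/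
variable {V : Type*} [Fintype V] [DecidableEq V]

/-!
A maximal independent set `J` of `G` misses `S` exactly when every `s ∈ S` has a neighbour in `J`.
As `S ⊆ N[i]`, such a neighbour lies in `N[i] ∪ M_{i,2}`, and as `J ∩ S = ∅` it lies in `M'`;
so `J ∩ M'` already dominates `S`, and so does any maximal independent set of `M'` containing it.
Conversely, a maximal independent set of `M'` dominating `S` extends to one of `G`, which then
misses `S`.
-/

section

open Finset

variable {α : Type*} {G : SimpleGraph α}

lemma isMaxIndepOnF_iff_maximal {W I : Finset α} :
    IsMaxIndepOnF G W I ↔ Maximal (fun J => J ⊆ W ∧ IsIndepF G J) I :=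
  ⟨fun ⟨hIW, hI, hmax⟩ => ⟨⟨hIW, hI⟩, fun J ⟨hJW, hJ⟩ hIJ => (hmax J hJW hJ hIJ).ge⟩,
    fun ⟨⟨hIW, hI⟩, hmax⟩ => ⟨hIW, hI, fun _ hJW hJ hIJ => le_antisymm hIJ (hmax ⟨hJW, hJ⟩ hIJ)⟩⟩

lemma IsIndepF.mono {I J : Finset α} (hJ : IsIndepF G J) (hIJ : I ⊆ J) : IsIndepF G I :=
  fun a ha b hb => hJ a (hIJ ha) b (hIJ hb)

lemma IsIndepF.exists_isMaxIndepOnF_superset [Finite α] {W I : Finset α} (hI : IsIndepF G I)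
    (hIW : I ⊆ W) : ∃ J, I ⊆ J ∧ IsMaxIndepOnF G W J :=
  let ⟨J, hIJ, hJ⟩ := Finite.exists_le_maximal (p := fun J => J ⊆ W ∧ IsIndepF G J) ⟨hIW, hI⟩
  ⟨J, hIJ, isMaxIndepOnF_iff_maximal.mpr hJ⟩

lemma IsMaxIndepOnF.isMaxIndepF_of_univ [Fintype α] {J : Finset α}
    (hJ : IsMaxIndepOnF G univ J) : IsMaxIndepF G J :=
  ⟨hJ.2.1, fun K hK hJK => hJ.2.2 K (subset_univ K) hK hJK⟩

lemma IsIndepF.exists_isMaxIndepF_superset [Fintype α] {I : Finset α} (hI : IsIndepF G I) :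
    ∃ J, I ⊆ J ∧ IsMaxIndepF G J :=
  let ⟨J, hIJ, hJ⟩ := hI.exists_isMaxIndepOnF_superset (subset_univ I)
  ⟨J, hIJ, hJ.isMaxIndepF_of_univ⟩

lemma IsIndepF.inter_eq_empty_of_forall_exists_adj [DecidableEq α] {J S : Finset α}
    (hJ : IsIndepF G J) (hS : ∀ s ∈ S, ∃ v ∈ J, G.Adj s v) : J ∩ S = ∅ :=
  eq_empty_of_forall_notMem fun s hs =>
    let ⟨v, hvJ, hsv⟩ := hS s (mem_inter.mp hs).2
    hJ s (mem_inter.mp hs).1 v hvJ hsv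

lemma IsMaxIndepF.exists_adj_of_notMem [DecidableEq α] {J : Finset α} (hJ : IsMaxIndepF G J)
    {s : α} (hs : s ∉ J) : ∃ w ∈ J, G.Adj s w := by
  by_contra! hnadj
  have hindep : IsIndepF G (insert s J) := by
    intro a ha b hb
    rcases mem_insert.mp ha with rfl | haJ <;> rcases mem_insert.mp hb with rfl | hbJ
    · exact G.loopless.irrefl _
    · exact hnadj b hbJ
    · exact fun hab => hnadj a haJ hab.symm
    · exact hJ.1 a haJ b hbJ
  exact hs (hJ.2 _ hindep (subset_insert s J) ▸ mem_insert_self s J)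

namespace SimpleGraph

lemma dist_eq_two_of_adj_of_adj {u v w : α} (huv : G.Adj u v) (hvw : G.Adj v w) (huw : u ≠ w)
    (hnadj : ¬ G.Adj u w) : G.dist u w = 2 := by
  have hle : G.dist u w ≤ 2 := dist_le (.cons huv (.cons hvw .nil))
  have hlt : 1 < G.dist u w :=
    (huv.reachable.trans hvw.reachable).one_lt_dist_of_ne_of_not_adj huw hnadj
  omega

lemma mem_closedNbhd_union_dist_eq_two_of_adj [Fintype α] [DecidableEq α] [DecidableRel G.Adj]
    {i s w : α} (hs : s ∈ insert i (G.neighborFinset i)) (hsw : G.Adj s w) :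
    w ∈ insert i (G.neighborFinset i) ∪ univ.filter (fun v => G.dist i v = 2) := by
  simp only [mem_union, mem_insert, mem_filter, mem_univ, true_and, mem_neighborFinset] at hs ⊢
  rcases hs with rfl | his
  · exact Or.inl (Or.inr hsw)
  · by_cases hw : w = i ∨ G.Adj i w
    · exact Or.inl hw
    · push Not at hw
      exact Or.inr (dist_eq_two_of_adj_of_adj his hsw (Ne.symm hw.1) hw.2)

end SimpleGraph

end

theorem no_disjoint_maxIndep_iff_twoHop_general (G : SimpleGraph V) [DecidableRel G.Adj]
    (i : V) (S : Finset V)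
    (hSN : S ⊆ insert i (G.neighborFinset i))
    (M' : Finset V)
    (hM' : M' = (insert i (G.neighborFinset i) ∪
      Finset.univ.filter (fun v => G.dist i v = 2)) \ S) :
    (¬ ∃ I : Finset V, IsMaxIndepF G I ∧ I ∩ S = ∅) ↔
      ∀ I : Finset V, IsMaxIndepOnF G M' I → ∃ s ∈ S, ∀ v ∈ I, ¬ G.Adj s v := by
  constructor
  · intro hnone I hI
    by_contra! hdom
    obtain ⟨J, hIJ, hJ⟩ := hI.2.1.exists_isMaxIndepF_superset
    exact hnone ⟨J, hJ, hJ.1.inter_eq_empty_of_forall_exists_adj fun s hs =>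
      let ⟨v, hvI, hsv⟩ := hdom s hs
      ⟨v, hIJ hvI, hsv⟩⟩
  · rintro hdom ⟨J, hJ, hJS⟩
    have hJS' : ∀ v ∈ J, v ∉ S :=
      Finset.disjoint_left.mp (Finset.disjoint_iff_inter_eq_empty.mpr hJS)
    obtain ⟨I, hJI, hI⟩ := (hJ.1.mono Finset.inter_subset_left).exists_isMaxIndepOnF_superset
      (Finset.inter_subset_right (s₁ := J))
    obtain ⟨s, hsS, hsI⟩ := hdom I hI
    obtain ⟨w, hwJ, hsw⟩ := hJ.exists_adj_of_notMem fun hsJ => hJS' s hsJ hsS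
    have hwM' : w ∈ M' := hM' ▸ Finset.mem_sdiff.mpr
      ⟨G.mem_closedNbhd_union_dist_eq_two_of_adj (hSN hsS) hsw, hJS' w hwJ⟩
    exact hsI w (hJI (Finset.mem_inter.mpr ⟨hwJ, hwM'⟩)) hsw

/-- Let `i ∈ S ⊆ N[i]` and `M' = (N[i] ∪ M_{i,2}) \ S ≠ ∅`, where `M_{i,2}`
is the set of vertices at distance exactly `2` from `i`. Then no maximal
independent set of `G` is disjoint from `S` iff for every maximal independent
set `I` of the subgraph induced on `M'` there is `s ∈ S` adjacent to no
vertex of `I`. -/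
theorem no_disjoint_maxIndep_iff_twoHop (G : SimpleGraph V) [DecidableRel G.Adj]
    (i : V) (S : Finset V) (hiS : i ∈ S)
    (hSN : S ⊆ insert i (G.neighborFinset i))
    (M' : Finset V)
    (hM' : M' = (insert i (G.neighborFinset i) ∪
      Finset.univ.filter (fun v => G.dist i v = 2)) \ S)
    (hne : M' ≠ ∅) :
    (¬ ∃ I : Finset V, IsMaxIndepF G I ∧ I ∩ S = ∅) ↔
      ∀ I : Finset V, IsMaxIndepOnF G M' I → ∃ s ∈ S, ∀ v ∈ I, ¬ G.Adj s v :=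
  no_disjoint_maxIndep_iff_twoHop_general G i S hSN M' hM'
end

section
/- Let G_c be a finite simple graph, i a vertex of G_c, and S a set of vertices with i ∈ S ⊆ N[i]. If S is not a feasible set, then for any vertex l' ∈ S, the set S \ {l'} is also not a feasible set. -/
/-!
A maximal independent set through `i` meets `S ⊆ N[i]` only in `i`, so the minimum in the
definition of feasibility is at most `1`; hence `S` fails to be feasible exactly when some
maximal independent set avoids `S`, and that set also avoids every subset of `S`.
-/

variable {V : Type*} [Fintype V] [DecidableEq V]

namespace SimpleGraph

variable {V : Type*} {G : SimpleGraph V}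

lemma isMaxIndepF_iff_maximal {I : Finset V} : IsMaxIndepF G I ↔ Maximal (IsIndepF G) I :=
  and_congr_right fun _ =>
    ⟨fun h _ hJ hIJ => (h _ hJ hIJ).ge, fun h _ hJ hIJ => le_antisymm hIJ (h hJ hIJ)⟩

lemma exists_isMaxIndepF_superset [Fintype V] {I : Finset V} (hI : IsIndepF G I) :
    ∃ J, IsMaxIndepF G J ∧ I ⊆ J := by
  obtain ⟨J, hIJ, hJ⟩ := Finite.exists_le_maximal hI
  exact ⟨J, isMaxIndepF_iff_maximal.mpr hJ, hIJ⟩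

lemma isIndepF_singleton (i : V) : IsIndepF G {i} := by
  simp [IsIndepF]

lemma exists_isMaxIndepF_inter_eq_singleton [Fintype V] [DecidableEq V] [DecidableRel G.Adj]
    {i : V} {S : Finset V} (hiS : i ∈ S) (hSN : S ⊆ insert i (G.neighborFinset i)) :
    ∃ I, IsMaxIndepF G I ∧ I ∩ S = {i} := by
  obtain ⟨I, hI, hiI⟩ := exists_isMaxIndepF_superset (isIndepF_singleton (G := G) i)
  rw [Finset.singleton_subset_iff] at hiI
  refine ⟨I, hI, Finset.eq_singleton_iff_unique_mem.mpr ⟨Finset.mem_inter.mpr ⟨hiI, hiS⟩, ?_⟩⟩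
  intro x hx
  obtain ⟨hxI, hxS⟩ := Finset.mem_inter.mp hx
  rcases Finset.mem_insert.mp (hSN hxS) with rfl | hxN
  · rfl
  · exact absurd ((G.mem_neighborFinset i x).mp hxN) (hI.1 i hiI x hxI)

lemma not_feasibleSet_of_disjoint [DecidableEq V] {I S : Finset V} (hI : IsMaxIndepF G I)
    (hIS : Disjoint I S) :
    ¬ FeasibleSet G S := by
  have h0 : sInf {n : ℕ | ∃ I : Finset V, IsMaxIndepF G I ∧ (I ∩ S).card = n} = 0 :=
    Nat.sInf_eq_zero.mpr <| .inl ⟨I, hI, by rw [Finset.disjoint_iff_inter_eq_empty.mp hIS]; rfl⟩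
  simp [FeasibleSet, h0]

lemma exists_isMaxIndepF_disjoint_of_not_feasibleSet [DecidableEq V] {I S : Finset V}
    (hI : IsMaxIndepF G I) (hIS : (I ∩ S).card = 1) (hS : ¬ FeasibleSet G S) :
    ∃ K, IsMaxIndepF G K ∧ Disjoint K S := by
  set counts := {n : ℕ | ∃ I : Finset V, IsMaxIndepF G I ∧ (I ∩ S).card = n}
  have h1 : 1 ∈ counts := ⟨I, hI, hIS⟩
  have h0 : sInf counts = 0 := Nat.lt_one_iff.mp (lt_of_le_of_ne (Nat.sInf_le h1) hS)
  obtain ⟨K, hK, hKS⟩ : 0 ∈ counts := h0 ▸ Nat.sInf_mem ⟨1, h1⟩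
  exact ⟨K, hK, Finset.disjoint_iff_inter_eq_empty.mpr (Finset.card_eq_zero.mp hKS)⟩

end SimpleGraph

open SimpleGraph in
theorem not_feasible_erase_general (G : SimpleGraph V) [DecidableRel G.Adj]
    (i : V) (S : Finset V) (hiS : i ∈ S)
    (hSN : S ⊆ insert i (G.neighborFinset i))
    (hS : ¬ FeasibleSet G S)
    (l' : V) :
    ¬ FeasibleSet G (S.erase l') := by
  obtain ⟨I, hI, hIS⟩ := exists_isMaxIndepF_inter_eq_singleton hiS hSN
  obtain ⟨K, hK, hKS⟩ :=
    exists_isMaxIndepF_disjoint_of_not_feasibleSet hI (by rw [hIS, Finset.card_singleton]) hS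
  exact not_feasibleSet_of_disjoint hK (hKS.mono_right (S.erase_subset l'))

/-- If `i ∈ S ⊆ N[i]` and `S` is not a feasible set, then for any vertex
`l' ∈ S`, the set `S \ {l'}` is also not a feasible set. -/
theorem not_feasible_erase (G : SimpleGraph V) [DecidableRel G.Adj]
    (i : V) (S : Finset V) (hiS : i ∈ S)
    (hSN : S ⊆ insert i (G.neighborFinset i))
    (hS : ¬ FeasibleSet G S)
    (l' : V) (hl' : l' ∈ S) :
    ¬ FeasibleSet G (S.erase l') :=
  not_feasible_erase_general G i S hiS hSN hS l'
end

section
/- Necessary condition for URLLC schedulability: Suppose there exists a schedule on N channels that meets the demand of every link. Then for every vertex i of the conflict graph G_c and every clique K of G_c with i ∈ K and K ⊆ N[i], the total utilization satisfies ∑_{l ∈ K} X_l / T_l ≤ N. -/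
variable {V : Type*} [Fintype V] [DecidableEq V]

/-- A schedule on `N` channels meets the demand of link `l` if, for every
packet index `p`, link `l` is active at least `X l` times (counting pairs of
slot and channel) within the window `[A l + p * T l, A l + p * T l + D l)`. -/
def MeetsDemand {N : ℕ} (sched : ℕ → Fin N → Finset V)
    (A T D X : V → ℕ) (l : V) : Prop :=
  ∀ p : ℕ,
    X l ≤ ((Finset.Ico (A l + p * T l) (A l + p * T l + D l) ×ˢ
      (Finset.univ : Finset (Fin N))).filter fun tc => l ∈ sched tc.1 tc.2).card

/-!
Fix a clique `K` and let `P = ∏_{l ∈ K} T_l`. Up to the horizon `max_{l ∈ K} A_l + m P`,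
link `l` has `m P / T_l` complete packet windows; they are disjoint because `D_l ≤ T_l`, and
each contains `X_l` active (slot, channel) pairs of `l`. No (slot, channel) pair is used by two
links of `K`, since every active set is independent. Hence
`m ∑_{l ∈ K} X_l P / T_l ≤ (max A + m P) N` for every `m`, which forces
`∑_{l ∈ K} X_l P / T_l ≤ P N`.
-/

open Finset Function

lemma pairwise_disjoint_periodic_windows {a T D : ℕ} (hDT : D ≤ T) :
    Pairwise (Disjoint on fun p => Ico (a + p * T) (a + p * T + D)) := by
  intro p q hpq
  wlog hlt : p < q generalizing p q
  · exact (this hpq.symm (by omega)).symm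
  have : p * T + T ≤ q * T := by simpa [add_mul] using Nat.mul_le_mul_right T hlt
  exact disjoint_left.2 fun t ht ht' => by simp only [mem_Ico] at ht ht'; omega

lemma periodic_window_subset_range {a T D p n : ℕ} (hDT : D ≤ T) (hp : p < n) :
    Ico (a + p * T) (a + p * T + D) ⊆ range (a + n * T) := by
  have : p * T + T ≤ n * T := by simpa [add_mul] using Nat.mul_le_mul_right T hp
  intro t ht
  simp only [mem_Ico, mem_range] at ht ⊢
  omega

section Schedule

variable {L : Type*} [DecidableEq L] {N : ℕ} (sched : ℕ → Fin N → Finset L)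

def activeSlots (l : L) (s : Finset ℕ) : Finset (ℕ × Fin N) :=
  (s ×ˢ univ).filter fun tc => l ∈ sched tc.1 tc.2

variable {sched}

lemma activeSlots_mono {l : L} {s s' : Finset ℕ} (h : s ⊆ s') :
    activeSlots sched l s ⊆ activeSlots sched l s' :=
  filter_subset_filter _ (product_subset_product_left h)

lemma card_activeSlots_biUnion {ι : Type*} [DecidableEq ι] (l : L) {I : Finset ι}
    {S : ι → Finset ℕ} (hS : (I : Set ι).PairwiseDisjoint S) :
    #(activeSlots sched l (I.biUnion S)) = ∑ p ∈ I, #(activeSlots sched l (S p)) := by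
  have : activeSlots sched l (I.biUnion S) = I.biUnion fun p => activeSlots sched l (S p) := by
    ext
    simp only [activeSlots, mem_filter, mem_product, mem_biUnion, mem_univ, and_true]
    tauto
  rw [this, card_biUnion]
  exact fun p hp q hq hpq => disjoint_filter_filter (disjoint_product.2 (Or.inl (hS hp hq hpq)))

lemma sum_card_activeSlots_le_of_isClique {G : SimpleGraph L}
    (hsched : ∀ t c, IsIndepF G (sched t c)) {K : Finset L} (hK : G.IsClique (K : Set L))
    (s : Finset ℕ) :
    ∑ l ∈ K, #(activeSlots sched l s) ≤ #s * N := by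
  rw [← card_biUnion]
  · calc _ ≤ #(s ×ˢ (univ : Finset (Fin N))) :=
          card_le_card (biUnion_subset.2 fun l _ => filter_subset _ _)
      _ = #s * N := by simp
  · exact fun l hl l' hl' hne =>
      disjoint_filter.2 fun tc _ h h' => hsched tc.1 tc.2 l h l' h' (hK hl hl' hne)

lemma mul_le_card_activeSlots_of_meetsDemand {A T D X : L → ℕ} {l : L}
    (hl : MeetsDemand sched A T D X l) (hDT : D l ≤ T l) (n : ℕ) :
    n * X l ≤ #(activeSlots sched l (range (A l + n * T l))) := by
  calc n * X l = ∑ p ∈ range n, X l := by simp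
    _ ≤ ∑ p ∈ range n, #(activeSlots sched l (Ico (A l + p * T l) (A l + p * T l + D l))) :=
        sum_le_sum fun p _ => hl p
    _ = #(activeSlots sched l
          ((range n).biUnion fun p => Ico (A l + p * T l) (A l + p * T l + D l))) :=
        (card_activeSlots_biUnion l ((pairwise_disjoint_periodic_windows hDT).set_pairwise _)).symm
    _ ≤ _ := card_le_card <| activeSlots_mono <| biUnion_subset.2 fun p hp =>
        periodic_window_subset_range hDT (mem_range.1 hp)

end Schedule

lemma le_of_forall_mul_le_add_mul {a b c : ℕ} (h : ∀ m, m * a ≤ b + m * c) : a ≤ c := by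
  by_contra! hca
  nlinarith [h (b + 1)]

lemma sum_div_le_of_sum_mul_div_le {ι : Type*} {K : Finset ι} {X T : ι → ℕ} {P N : ℕ}
    (hP : 0 < P) (hdvd : ∀ l ∈ K, T l ∣ P) (h : ∑ l ∈ K, X l * (P / T l) ≤ P * N) :
    ∑ l ∈ K, (X l : ℝ) / T l ≤ N := by
  have hscale : (P : ℝ) * ∑ l ∈ K, (X l : ℝ) / T l = ∑ l ∈ K, X l * (P / T l) := by
    push_cast
    rw [mul_sum]
    refine sum_congr rfl fun l hl => ?_
    have hT : (T l : ℝ) ≠ 0 := by exact_mod_cast (Nat.pos_of_dvd_of_pos (hdvd l hl) hP).ne'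
    rw [Nat.cast_div (hdvd l hl) hT]
    field_simp
  refine le_of_mul_le_mul_left ?_ (Nat.cast_pos.2 hP : (0 : ℝ) < P)
  rw [hscale]
  exact_mod_cast h

theorem necessary_condition_general (G : SimpleGraph V) [DecidableRel G.Adj]
    (N : ℕ) (A T D X : V → ℕ)
    (hT : ∀ l, 1 ≤ T l) (hDT : ∀ l, D l ≤ T l)
    (sched : ℕ → Fin N → Finset V)
    (hsched : ∀ t c, IsIndepF G (sched t c))
    (hmeets : ∀ l : V, MeetsDemand sched A T D X l) :
    ∀ (i : V) (K : Finset V), G.IsClique (K : Set V) → i ∈ K →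
      K ⊆ insert i (G.neighborFinset i) →
      ∑ l ∈ K, (X l : ℝ) / (T l : ℝ) ≤ (N : ℝ) := by
  intro _ K hK _ _
  set P := ∏ l ∈ K, T l
  have hdvd : ∀ l ∈ K, T l ∣ P := fun l hl => dvd_prod_of_mem T hl
  refine sum_div_le_of_sum_mul_div_le (prod_pos fun l _ => hT l) hdvd ?_
  refine le_of_forall_mul_le_add_mul (b := K.sup A * N) fun m => ?_
  set H := K.sup A + m * P with hH
  have hwindows : ∀ l ∈ K, A l + m * (P / T l) * T l ≤ H := fun l hl => by
    rw [mul_assoc, Nat.div_mul_cancel (hdvd l hl)]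
    exact Nat.add_le_add_right (le_sup hl) _
  calc m * ∑ l ∈ K, X l * (P / T l) = ∑ l ∈ K, m * (P / T l) * X l := by
        rw [mul_sum]; exact sum_congr rfl fun l _ => by ring
    _ ≤ ∑ l ∈ K, #(activeSlots sched l (range H)) := sum_le_sum fun l hl =>
        (mul_le_card_activeSlots_of_meetsDemand (hmeets l) (hDT l) _).trans
          (card_le_card (activeSlots_mono (range_subset_range.2 (hwindows l hl))))
    _ ≤ #(range H) * N := sum_card_activeSlots_le_of_isClique hsched hK _
    _ = K.sup A * N + m * (P * N) := by rw [card_range, hH]; ring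

/-- Necessary condition for URLLC schedulability: if some schedule on `N`
channels meets the demand of every link, then for every vertex `i` and every
clique `K` with `i ∈ K ⊆ N[i]`, the total utilization `∑_{l ∈ K} X_l / T_l`
is at most `N`. -/
theorem necessary_condition (G : SimpleGraph V) [DecidableRel G.Adj]
    (N : ℕ) (hN : 1 ≤ N) (A T D X : V → ℕ)
    (hT : ∀ l, 1 ≤ T l) (hD1 : ∀ l, 1 ≤ D l) (hDT : ∀ l, D l ≤ T l)
    (sched : ℕ → Fin N → Finset V)
    (hsched : ∀ t c, IsIndepF G (sched t c))
    (hmeets : ∀ l : V, MeetsDemand sched A T D X l) :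
    ∀ (i : V) (K : Finset V), G.IsClique (K : Set V) → i ∈ K →
      K ⊆ insert i (G.neighborFinset i) →
      ∑ l ∈ K, (X l : ℝ) / (T l : ℝ) ≤ (N : ℝ) :=
  necessary_condition_general G N A T D X hT hDT sched hsched hmeets
end
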